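/- Role-error theorem for the second (necessary) type system: if ⊢₂ M : T and role A does not dominate T, then either M diverges under A, or there exists N such that A ⊢ M →* N and N produces a role error under A. -/
import Mathlib


namespace LRBAC

/-- Role domination: `dom A B` means `A = A ⊔ B`. -/
def dom {R : Type*} [BooleanAlgebra R] (A B : R) : Prop := A = A ⊔ B

/-- Role modifiers: amplification `up A` and restriction `dn A`. -/
inductive Mod (R : Type*) where
  | up (A : R)
  | dn (A : R)

/-- Applying a role modifier to a context role. -/
def Mod.app {R : Type*} [BooleanAlgebra R] : Mod R → R → R
  | .up A, C => A ⊔ C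
  | .dn A, C => A ⊓ C

/-- Terms of λ-RBAC (de Bruijn representation). -/
inductive Tm (R : Type*) where
  | base (n : ℕ)
  | var (n : ℕ)
  | abs (M : Tm R)
  | app (M N : Tm R)
  | fix (M : Tm R)
  | grd (A : R) (M : Tm R)
  | chk (M : Tm R)
  | unit (M : Tm R)
  | bind (M N : Tm R)
  | mod (m : Mod R) (M : Tm R)

/-- de Bruijn shifting. -/
def Tm.shift {R : Type*} (d : ℕ) : ℕ → Tm R → Tm R
  | _, .base n => .base n
  | c, .var n => .var (if n < c then n else n + d)
  | c, .abs M => .abs (Tm.shift d (c+1) M)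
  | c, .app M N => .app (Tm.shift d c M) (Tm.shift d c N)
  | c, .fix M => .fix (Tm.shift d c M)
  | c, .grd A M => .grd A (Tm.shift d c M)
  | c, .chk M => .chk (Tm.shift d c M)
  | c, .unit M => .unit (Tm.shift d c M)
  | c, .bind M N => .bind (Tm.shift d c M) (Tm.shift d (c+1) N)
  | c, .mod m M => .mod m (Tm.shift d c M)

/-- Capture-avoiding substitution: `Tm.subst k N M = M[k := N]`. -/
def Tm.subst {R : Type*} : ℕ → Tm R → Tm R → Tm R
  | _, _, .base n => .base n
  | k, N, .var n => if n = k then N else if k < n then .var (n-1) else .var n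
  | k, N, .abs M => .abs (Tm.subst (k+1) (Tm.shift 1 0 N) M)
  | k, N, .app M M' => .app (Tm.subst k N M) (Tm.subst k N M')
  | k, N, .fix M => .fix (Tm.subst k N M)
  | k, N, .grd A M => .grd A (Tm.subst k N M)
  | k, N, .chk M => .chk (Tm.subst k N M)
  | k, N, .unit M => .unit (Tm.subst k N M)
  | k, N, .bind M M' => .bind (Tm.subst k N M) (Tm.subst (k+1) (Tm.shift 1 0 N) M')
  | k, N, .mod m M => .mod m (Tm.subst k N M)

/-- Values. -/
inductive Tm.IsValue {R : Type*} : Tm R → Prop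
  | base (n : ℕ) : Tm.IsValue (.base n)
  | var (n : ℕ) : Tm.IsValue (.var n)
  | abs (M : Tm R) : Tm.IsValue (.abs M)
  | grd (A : R) (M : Tm R) : Tm.IsValue (.grd A M)
  | unit (M : Tm R) : Tm.IsValue (.unit M)

variable {R : Type*} [BooleanAlgebra R]

/-- Role-indexed small-step evaluation `A ⊢ M → M'`. -/
inductive Eval : R → Tm R → Tm R → Prop
  | rApp {A : R} {M N : Tm R} : Eval A (.app (.abs M) N) (Tm.subst 0 N M)
  | cApp {A : R} {M M' N : Tm R} : Eval A M M' → Eval A (.app M N) (.app M' N)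
  | rFix {A : R} {M : Tm R} :
      Eval A (.fix (.abs M)) (Tm.subst 0 (.fix (.abs M)) M)
  | cFix {A : R} {M M' : Tm R} : Eval A M M' → Eval A (.fix M) (.fix M')
  | rChk {A B : R} {M : Tm R} : dom A B → Eval A (.chk (.grd B M)) (.unit M)
  | cChk {A : R} {M M' : Tm R} : Eval A M M' → Eval A (.chk M) (.chk M')
  | rBind {A : R} {M N : Tm R} : Eval A (.bind (.unit M) N) (Tm.subst 0 M N)
  | cBind {A : R} {M M' N : Tm R} : Eval A M M' → Eval A (.bind M N) (.bind M' N)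
  | rMod {A : R} {m : Mod R} {V : Tm R} : V.IsValue → Eval A (.mod m V) V
  | cMod {A : R} {m : Mod R} {M M' : Tm R} :
      Eval (m.app A) M M' → Eval A (.mod m M) (.mod m M')

/-- Role errors `M ⇑ᴬ err`. -/
inductive Err : R → Tm R → Prop
  | chk {A B : R} {M : Tm R} : ¬ dom A B → Err A (.chk (.grd B M))
  | ctxApp {A : R} {M N : Tm R} : Err A M → Err A (.app M N)
  | ctxFix {A : R} {M : Tm R} : Err A M → Err A (.fix M)
  | ctxBind {A : R} {M N : Tm R} : Err A M → Err A (.bind M N)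
  | ctxChk {A : R} {M : Tm R} : Err A M → Err A (.chk M)
  | ctxMod {A : R} {m : Mod R} {M : Tm R} : Err (m.app A) M → Err A (.mod m M)

/-- Multi-step evaluation. -/
def Evals (A : R) : Tm R → Tm R → Prop := Relation.ReflTransGen (Eval A)

/-- Divergence under context role `A`. -/
def Diverges (A : R) (M : Tm R) : Prop :=
  ∃ f : ℕ → Tm R, f 0 = M ∧ ∀ n, Eval A (f n) (f (n+1))

/-- Types: base, arrow, guard `A⊳T`, computation `A○T`. -/
inductive Ty (R : Type*) where
  | base
  | arrow (S T : Ty R)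
  | grd (A : R) (T : Ty R)
  | comp (A : R) (T : Ty R)

/-- Subtyping, indexed by the system: `true` is the first ("sufficient")
system, `false` the second ("necessary") one. -/
inductive Sub : Bool → Ty R → Ty R → Prop
  | base {s} : Sub s .base .base
  | arrow {s} {S S' T T' : Ty R} :
      Sub s S' S → Sub s T T' → Sub s (.arrow S T) (.arrow S' T')
  | grd {s} {A A' : R} {T T' : Ty R} :
      (s = true → dom A' A) → (s = false → dom A A') → Sub s T T' →
      Sub s (.grd A T) (.grd A' T')
  | comp {s} {A A' : R} {T T' : Ty R} :
      (s = true → dom A' A) → (s = false → dom A A') → Sub s T T' →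
      Sub s (.comp A T) (.comp A' T')

/-- Typing judgment of the two λ-RBAC type systems. -/
inductive Typing : Bool → List (Ty R) → Tm R → Ty R → Prop
  | base {s Γ n} : Typing s Γ (.base n) .base
  | var {s Γ n T} : Γ[n]? = some T → Typing s Γ (.var n) T
  | sub {s Γ M T T'} : Typing s Γ M T → Sub s T T' → Typing s Γ M T'
  | abs {s Γ M S T} : Typing s (S :: Γ) M T → Typing s Γ (.abs M) (.arrow S T)
  | app {s Γ M N S T} :
      Typing s Γ M (.arrow S T) → Typing s Γ N S → Typing s Γ (.app M N) T
  | fix {s Γ M T} : Typing s Γ M (.arrow T T) → Typing s Γ (.fix M) T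
  | grd {s Γ M A T} : Typing s Γ M T → Typing s Γ (.grd A M) (.grd A T)
  | chk {s Γ M A T} : Typing s Γ M (.grd A T) → Typing s Γ (.chk M) (.comp A T)
  | unit {s Γ M T} : Typing s Γ M T → Typing s Γ (.unit M) (.comp ⊥ T)
  | bind {s Γ M N A B T S} :
      Typing s Γ M (.comp A T) → Typing s (T :: Γ) N (.comp B S) →
      Typing s Γ (.bind M N) (.comp (A ⊔ B) S)
  | modUp {s Γ M A B T} :
      Typing s Γ M (.comp B T) →
      Typing s Γ (.mod (.up A) M) (.comp (B ⊓ Aᶜ) T)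
  | modDn {s Γ M A B T} :
      Typing s Γ M (.comp B T) → (s = true → dom A B) →
      Typing s Γ (.mod (.dn A) M) (.comp B T)

/-- Type compatibility. -/
def Compat (T S : Ty R) : Prop :=
  T = S ∨ ∃ (A B : R) (U : Ty R), T = .comp A U ∧ S = .comp B U

/-- A role dominates a type. -/
def DomTy (A : R) : Ty R → Prop
  | .comp B _ => dom A B
  | _ => True

end LRBAC

open LRBAC

namespace LRBAC

variable {R : Type*} [BooleanAlgebra R]

theorem dom_iff {A B : R} : dom A B ↔ B ≤ A := by
  rw [dom, eq_comm, sup_eq_left]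

theorem dom_refl (A : R) : dom A A := dom_iff.2 le_rfl
theorem dom_bot (A : R) : dom A ⊥ := dom_iff.2 bot_le
theorem dom_trans {A B C : R} (h1 : dom A B) (h2 : dom B C) : dom A C :=
  dom_iff.2 ((dom_iff.1 h2).trans (dom_iff.1 h1))

theorem Sub.rfl {s} : ∀ T : Ty R, Sub s T T
  | .base => .base
  | .arrow S T => .arrow (Sub.rfl S) (Sub.rfl T)
  | .grd A T => .grd (fun _ => dom_refl A) (fun _ => dom_refl A) (Sub.rfl T)
  | .comp A T => .comp (fun _ => dom_refl A) (fun _ => dom_refl A) (Sub.rfl T)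

theorem Sub.trans' {s} : ∀ (T₂ : Ty R) {T₁ T₃ : Ty R}, Sub s T₁ T₂ → Sub s T₂ T₃ → Sub s T₁ T₃
  | .base, _, _, .base, .base => .base
  | .arrow S T, _, _, .arrow h1 h2, .arrow h1' h2' =>
      .arrow (Sub.trans' S h1' h1) (Sub.trans' T h2 h2')
  | .grd _ T, _, _, .grd a b h, .grd a' b' h' =>
      .grd (fun e => dom_trans (a' e) (a e)) (fun e => dom_trans (b e) (b' e)) (Sub.trans' T h h')
  | .comp _ T, _, _, .comp a b h, .comp a' b' h' =>
      .comp (fun e => dom_trans (a' e) (a e)) (fun e => dom_trans (b e) (b' e)) (Sub.trans' T h h')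

section Inv
variable {s : Bool} {Γ : List (Ty R)} {X : Ty R}

theorem base_inv {n} (h : Typing s Γ (.base n) X) : X = .base := by
  generalize e : (Tm.base n : Tm R) = M0 at h
  induction h with
  | base => rfl
  | sub h hs ih => have e2 := ih e; subst e2; cases hs; rfl
  | _ => cases e

theorem var_inv {n} (h : Typing s Γ (.var n) X) :
    ∃ T, Γ[n]? = some T ∧ Sub s T X := by
  generalize e : (Tm.var n : Tm R) = M0 at h
  induction h with
  | var hg => cases e; exact ⟨_, hg, Sub.rfl _⟩
  | sub h hs ih =>
      obtain ⟨T, hg, hsub⟩ := ih e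
      exact ⟨T, hg, Sub.trans' _ hsub hs⟩
  | _ => cases e

theorem abs_inv {M : Tm R} (h : Typing s Γ (.abs M) X) :
    ∃ S T S' T', X = .arrow S T ∧ Typing s (S' :: Γ) M T' ∧ Sub s S S' ∧ Sub s T' T := by
  generalize e : (Tm.abs M : Tm R) = M0 at h
  induction h with
  | abs hM => cases e; exact ⟨_, _, _, _, rfl, hM, Sub.rfl _, Sub.rfl _⟩
  | sub h hs ih =>
      obtain ⟨S, T, S', T', rfl, hM, h1, h2⟩ := ih e
      cases hs with
      | arrow hS hT => exact ⟨_, _, _, _, rfl, hM, Sub.trans' _ hS h1, Sub.trans' _ h2 hT⟩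
  | _ => cases e

theorem app_inv {M N : Tm R} (h : Typing s Γ (.app M N) X) :
    ∃ S, Typing s Γ M (.arrow S X) ∧ Typing s Γ N S := by
  generalize e : (Tm.app M N : Tm R) = M0 at h
  induction h with
  | app hM hN => cases e; exact ⟨_, hM, hN⟩
  | sub h hs ih =>
      obtain ⟨S, hM, hN⟩ := ih e
      exact ⟨S, hM.sub (.arrow (Sub.rfl _) hs), hN⟩
  | _ => cases e

theorem fix_inv {M : Tm R} (h : Typing s Γ (.fix M) X) :
    ∃ T, Typing s Γ M (.arrow T T) ∧ Sub s T X := by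
  generalize e : (Tm.fix M : Tm R) = M0 at h
  induction h with
  | fix hM => cases e; exact ⟨_, hM, Sub.rfl _⟩
  | sub h hs ih =>
      obtain ⟨T, hM, h1⟩ := ih e
      exact ⟨T, hM, Sub.trans' _ h1 hs⟩
  | _ => cases e

theorem grd_inv {B : R} {M : Tm R} (h : Typing s Γ (.grd B M) X) :
    ∃ A₀ T, X = .grd A₀ T ∧ (s = false → dom B A₀) ∧ Typing s Γ M T := by
  generalize e : (Tm.grd B M : Tm R) = M0 at h
  induction h with
  | grd hM => cases e; exact ⟨_, _, rfl, fun _ => dom_refl _, hM⟩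
  | sub h hs ih =>
      obtain ⟨A₀, T, rfl, hd, hM⟩ := ih e
      cases hs with
      | grd h1 h2 hT =>
          exact ⟨_, _, rfl, fun e' => dom_trans (hd e') (h2 e'), hM.sub hT⟩
  | _ => cases e

theorem chk_inv {M : Tm R} (h : Typing s Γ (.chk M) X) :
    ∃ A₀ T, X = .comp A₀ T ∧ Typing s Γ M (.grd A₀ T) := by
  generalize e : (Tm.chk M : Tm R) = M0 at h
  induction h with
  | chk hM => cases e; exact ⟨_, _, rfl, hM⟩
  | sub h hs ih =>
      obtain ⟨A₀, T, rfl, hM⟩ := ih e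
      cases hs with
      | comp h1 h2 hT => exact ⟨_, _, rfl, hM.sub (.grd h1 h2 hT)⟩
  | _ => cases e

theorem unit_inv {M : Tm R} (h : Typing s Γ (.unit M) X) :
    ∃ B U, X = .comp B U ∧ (s = false → dom ⊥ B) ∧ Typing s Γ M U := by
  generalize e : (Tm.unit M : Tm R) = M0 at h
  induction h with
  | unit hM => cases e; exact ⟨_, _, rfl, fun _ => dom_refl _, hM⟩
  | sub h hs ih =>
      obtain ⟨B, U, rfl, hd, hM⟩ := ih e
      cases hs with
      | comp h1 h2 hT => exact ⟨_, _, rfl, fun e' => dom_trans (hd e') (h2 e'), hM.sub hT⟩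
  | _ => cases e

theorem bind_inv {M N : Tm R} (h : Typing s Γ (.bind M N) X) :
    ∃ C U A₀ B₀ T, X = .comp C U ∧ (s = false → dom (A₀ ⊔ B₀) C) ∧
      Typing s Γ M (.comp A₀ T) ∧ Typing s (T :: Γ) N (.comp B₀ U) := by
  generalize e : (Tm.bind M N : Tm R) = M0 at h
  induction h with
  | bind hM hN => cases e; exact ⟨_, _, _, _, _, rfl, fun _ => dom_refl _, hM, hN⟩
  | sub h hs ih =>
      obtain ⟨C, U, A₀, B₀, T, rfl, hd, hM, hN⟩ := ih e
      cases hs with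
      | comp h1 h2 hT =>
          exact ⟨_, _, A₀, B₀, T, rfl, fun e' => dom_trans (hd e') (h2 e'), hM,
            hN.sub (.comp (fun _ => dom_refl _) (fun _ => dom_refl _) hT)⟩
  | _ => cases e

theorem mod_up_inv {A₀ : R} {M : Tm R} (h : Typing s Γ (.mod (.up A₀) M) X) :
    ∃ C U B, X = .comp C U ∧ (s = false → dom (B ⊓ A₀ᶜ) C) ∧ Typing s Γ M (.comp B U) := by
  generalize e : (Tm.mod (.up A₀) M : Tm R) = M0 at h
  induction h with
  | modUp hM => cases e; exact ⟨_, _, _, rfl, fun _ => dom_refl _, hM⟩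
  | modDn hM _ => cases e
  | sub h hs ih =>
      obtain ⟨C, U, B, rfl, hd, hM⟩ := ih e
      cases hs with
      | comp h1 h2 hT =>
          exact ⟨_, _, B, rfl, fun e' => dom_trans (hd e') (h2 e'),
            hM.sub (.comp (fun _ => dom_refl _) (fun _ => dom_refl _) hT)⟩
  | _ => cases e

theorem mod_dn_inv {A₀ : R} {M : Tm R} (h : Typing s Γ (.mod (.dn A₀) M) X) :
    ∃ C U B, X = .comp C U ∧ (s = false → dom B C) ∧ Typing s Γ M (.comp B U) := by
  generalize e : (Tm.mod (.dn A₀) M : Tm R) = M0 at h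
  induction h with
  | modDn hM _ => cases e; exact ⟨_, _, _, rfl, fun _ => dom_refl _, hM⟩
  | modUp hM => cases e
  | sub h hs ih =>
      obtain ⟨C, U, B, rfl, hd, hM⟩ := ih e
      cases hs with
      | comp h1 h2 hT =>
          exact ⟨_, _, B, rfl, fun e' => dom_trans (hd e') (h2 e'),
            hM.sub (.comp (fun _ => dom_refl _) (fun _ => dom_refl _) hT)⟩
  | _ => cases e

end Inv
theorem typing_shift {s : Bool} {Γ : List (Ty R)} {M : Tm R} {T : Ty R}
    (h : Typing s Γ M T) :
    ∀ (Γ₁ Γ₂ Δ : List (Ty R)), Γ = Γ₁ ++ Γ₂ →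
      Typing s (Γ₁ ++ Δ ++ Γ₂) (Tm.shift Δ.length Γ₁.length M) T := by
  induction h with
  | base => intro Γ₁ Γ₂ Δ hΓ; exact .base
  | @var _ n T hg =>
      intro Γ₁ Γ₂ Δ hΓ; subst hΓ
      simp only [Tm.shift]
      by_cases hn : n < Γ₁.length
      · rw [if_pos hn]
        refine .var ?_
        rw [List.getElem?_append_left hn] at hg
        rw [List.getElem?_append_left (by simp; omega), List.getElem?_append_left hn]
        exact hg
      · rw [if_neg hn]
        push_neg at hn
        refine .var ?_
        rw [List.getElem?_append_right hn] at hg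
        rw [List.getElem?_append_right (by simp; omega)]
        convert hg using 2
        simp; omega
  | sub h hs ih => intro Γ₁ Γ₂ Δ hΓ; exact (ih Γ₁ Γ₂ Δ hΓ).sub hs
  | abs hM ih =>
      intro Γ₁ Γ₂ Δ hΓ; subst hΓ
      exact .abs (ih (_ :: Γ₁) Γ₂ Δ rfl)
  | app hM hN ihM ihN =>
      intro Γ₁ Γ₂ Δ hΓ; exact .app (ihM Γ₁ Γ₂ Δ hΓ) (ihN Γ₁ Γ₂ Δ hΓ)
  | fix hM ih => intro Γ₁ Γ₂ Δ hΓ; exact .fix (ih Γ₁ Γ₂ Δ hΓ)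
  | grd hM ih => intro Γ₁ Γ₂ Δ hΓ; exact .grd (ih Γ₁ Γ₂ Δ hΓ)
  | chk hM ih => intro Γ₁ Γ₂ Δ hΓ; exact .chk (ih Γ₁ Γ₂ Δ hΓ)
  | unit hM ih => intro Γ₁ Γ₂ Δ hΓ; exact .unit (ih Γ₁ Γ₂ Δ hΓ)
  | bind hM hN ihM ihN =>
      intro Γ₁ Γ₂ Δ hΓ; subst hΓ
      exact .bind (ihM Γ₁ Γ₂ Δ rfl) (ihN (_ :: Γ₁) Γ₂ Δ rfl)
  | modUp hM ih => intro Γ₁ Γ₂ Δ hΓ; exact .modUp (ih Γ₁ Γ₂ Δ hΓ)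
  | modDn hM hc ih => intro Γ₁ Γ₂ Δ hΓ; exact .modDn (ih Γ₁ Γ₂ Δ hΓ) hc
theorem typing_subst {s : Bool} {Γ : List (Ty R)} {M : Tm R} {T : Ty R}
    (h : Typing s Γ M T) :
    ∀ (Γ₁ Γ₂ : List (Ty R)) (S : Ty R) (N : Tm R), Γ = Γ₁ ++ S :: Γ₂ →
      Typing s (Γ₁ ++ Γ₂) N S →
      Typing s (Γ₁ ++ Γ₂) (Tm.subst Γ₁.length N M) T := by
  induction h with
  | base => intros; exact .base
  | @var _ n T hg =>
      intro Γ₁ Γ₂ S N hΓ hN; subst hΓ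
      simp only [Tm.subst]
      rcases lt_trichotomy n Γ₁.length with hn | hn | hn
      · rw [if_neg (by omega), if_neg (by omega)]
        refine .var ?_
        rw [List.getElem?_append_left hn] at hg
        rw [List.getElem?_append_left hn]
        exact hg
      · rw [if_pos hn]
        rw [hn, List.getElem?_append_right le_rfl] at hg
        simp at hg
        exact hg ▸ hN
      · rw [if_neg (by omega), if_pos hn]
        refine .var ?_
        rw [List.getElem?_append_right (by omega)] at hg
        rw [List.getElem?_append_right (by omega)]
        rw [show n - Γ₁.length = (n - 1 - Γ₁.length) + 1 by omega] at hg
        simpa using hg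
  | sub h hs ih => intro Γ₁ Γ₂ S N hΓ hN; exact (ih Γ₁ Γ₂ S N hΓ hN).sub hs
  | abs hM ih =>
      intro Γ₁ Γ₂ S N hΓ hN; subst hΓ
      exact .abs (ih (_ :: Γ₁) Γ₂ S _ rfl (typing_shift hN [] (Γ₁ ++ Γ₂) [_] rfl))
  | app hM hN ihM ihN =>
      intro Γ₁ Γ₂ S N hΓ hN'
      exact .app (ihM Γ₁ Γ₂ S N hΓ hN') (ihN Γ₁ Γ₂ S N hΓ hN')
  | fix hM ih => intro Γ₁ Γ₂ S N hΓ hN; exact .fix (ih Γ₁ Γ₂ S N hΓ hN)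
  | grd hM ih => intro Γ₁ Γ₂ S N hΓ hN; exact .grd (ih Γ₁ Γ₂ S N hΓ hN)
  | chk hM ih => intro Γ₁ Γ₂ S N hΓ hN; exact .chk (ih Γ₁ Γ₂ S N hΓ hN)
  | unit hM ih => intro Γ₁ Γ₂ S N hΓ hN; exact .unit (ih Γ₁ Γ₂ S N hΓ hN)
  | bind hM hN ihM ihN =>
      intro Γ₁ Γ₂ S N hΓ hN'; subst hΓ
      exact .bind (ihM Γ₁ Γ₂ S N rfl hN')
        (ihN (_ :: Γ₁) Γ₂ S _ rfl (typing_shift hN' [] (Γ₁ ++ Γ₂) [_] rfl))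
  | modUp hM ih => intro Γ₁ Γ₂ S N hΓ hN; exact .modUp (ih Γ₁ Γ₂ S N hΓ hN)
  | modDn hM hc ih => intro Γ₁ Γ₂ S N hΓ hN; exact .modDn (ih Γ₁ Γ₂ S N hΓ hN) hc

theorem typing_subst0 {s : Bool} {Γ : List (Ty R)} {M N : Tm R} {S T : Ty R}
    (h : Typing s (S :: Γ) M T) (hN : Typing s Γ N S) :
    Typing s Γ (Tm.subst 0 N M) T :=
  typing_subst h [] Γ S N rfl hN
theorem domTy_comp {A B : R} {U : Ty R} : DomTy A (.comp B U) ↔ dom A B := Iff.rfl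

theorem Compat.arrow_elim {S T S' : Ty R} (h : Compat (.arrow S T) S') : S' = .arrow S T := by
  rcases h with rfl | ⟨a, b, u, he, _⟩
  · rfl
  · cases he

theorem Compat.grd_elim {B : R} {T S' : Ty R} (h : Compat (.grd B T) S') : S' = .grd B T := by
  rcases h with rfl | ⟨a, b, u, he, _⟩
  · rfl
  · cases he

theorem Compat.comp_elim {B : R} {U S' : Ty R} (h : Compat (.comp B U) S') :
    ∃ b, S' = .comp b U := by
  rcases h with rfl | ⟨a, b, u, he, rfl⟩
  · exact ⟨B, rfl⟩
  · cases he; exact ⟨b, rfl⟩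

theorem ba1 {a b c : R} (h : b ⊓ aᶜ ≤ c) : b ≤ a ⊔ c := by
  rw [← sdiff_eq] at h
  exact sdiff_le_iff.mp h

theorem ba2 {a b c : R} (h : b ≤ a ⊔ c) : b ⊓ aᶜ ≤ c := by
  rw [← sdiff_eq]
  exact sdiff_le_iff.mpr h

theorem preservation {A : R} {M M' : Tm R} (hE : Eval A M M') :
    ∀ (Γ : List (Ty R)) (T : Ty R), Typing false Γ M T →
      ∃ S, Typing false Γ M' S ∧ Compat T S ∧
        ∀ A', dom A' A → DomTy A' S → DomTy A' T := by
  induction hE with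
  | @rApp A M N =>
      intro Γ T h
      obtain ⟨S, hM, hN⟩ := app_inv h
      obtain ⟨S₁, T₁, S', T', heq, hM', hS, hT'⟩ := abs_inv hM
      injection heq with e1 e2; subst e1; subst e2
      exact ⟨T, (typing_subst0 hM' (hN.sub hS)).sub hT', Or.inl rfl, fun _ _ h => h⟩
  | @cApp A M M₀ N hE ih =>
      intro Γ T h
      obtain ⟨S, hM, hN⟩ := app_inv h
      obtain ⟨S', hM', hC, _⟩ := ih Γ _ hM
      cases hC.arrow_elim
      exact ⟨T, .app hM' hN, Or.inl rfl, fun _ _ h => h⟩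
  | @rFix A M =>
      intro Γ T h
      obtain ⟨T₀, hM, hsub⟩ := fix_inv h
      obtain ⟨S₁, T₁, S', T', heq, hM', hS, hT'⟩ := abs_inv hM
      injection heq with e1 e2; subst e1; subst e2
      have hfix : Typing false Γ (.fix (.abs M)) S' := (Typing.fix hM).sub hS
      exact ⟨T, ((typing_subst0 hM' hfix).sub hT').sub hsub, Or.inl rfl, fun _ _ h => h⟩
  | @cFix A M M₀ hE ih =>
      intro Γ T h
      obtain ⟨T₀, hM, hsub⟩ := fix_inv h
      obtain ⟨S', hM', hC, _⟩ := ih Γ _ hM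
      cases hC.arrow_elim
      exact ⟨T, (Typing.fix hM').sub hsub, Or.inl rfl, fun _ _ h => h⟩
  | @rChk A B M hAB =>
      intro Γ T h
      obtain ⟨A₀, T₀, rfl, hM⟩ := chk_inv h
      obtain ⟨A₁, T₁, heq, hd, hM'⟩ := grd_inv hM
      injection heq with e1 e2; subst e1; subst e2
      refine ⟨.comp ⊥ T₀, .unit hM', Or.inr ⟨A₀, ⊥, T₀, rfl, rfl⟩, fun A' hA' _ => ?_⟩
      exact domTy_comp.mpr (dom_trans (dom_trans hA' hAB) (hd rfl))
  | @cChk A M M₀ hE ih =>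
      intro Γ T h
      obtain ⟨A₀, T₀, rfl, hM⟩ := chk_inv h
      obtain ⟨S', hM', hC, _⟩ := ih Γ _ hM
      cases hC.grd_elim
      exact ⟨.comp A₀ T₀, .chk hM', Or.inl rfl, fun _ _ h => h⟩
  | @rBind A M N =>
      intro Γ T h
      obtain ⟨C, U, A₀, B₀, T₀, rfl, hd, hM, hN⟩ := bind_inv h
      obtain ⟨B', U', heq, hbot, hM'⟩ := unit_inv hM
      injection heq with e1 e2; subst e1; subst e2
      have hA₀ : A₀ = ⊥ := le_bot_iff.mp (dom_iff.mp (hbot rfl))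
      refine ⟨.comp B₀ U, typing_subst0 hN hM', Or.inr ⟨C, B₀, U, rfl, rfl⟩,
        fun A' hA' hB₀ => ?_⟩
      refine domTy_comp.mpr (dom_iff.mpr ?_)
      have h1 : C ≤ A₀ ⊔ B₀ := dom_iff.mp (hd rfl)
      rw [hA₀, bot_sup_eq] at h1
      exact h1.trans (dom_iff.mp hB₀)
  | @cBind A M M₀ N hE ih =>
      intro Γ T h
      obtain ⟨C, U, A₀, B₀, T₀, rfl, hd, hM, hN⟩ := bind_inv h
      obtain ⟨S', hM', hC, htr⟩ := ih Γ _ hM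
      obtain ⟨b, rfl⟩ := hC.comp_elim
      refine ⟨.comp (b ⊔ B₀) U, .bind hM' hN, Or.inr ⟨C, b ⊔ B₀, U, rfl, rfl⟩,
        fun A' hA' hb => ?_⟩
      have h1 : b ⊔ B₀ ≤ A' := dom_iff.mp (domTy_comp.mp hb)
      have h2 : dom A' A₀ := domTy_comp.mp
        (htr A' hA' (domTy_comp.mpr (dom_iff.mpr (le_sup_left.trans h1))))
      refine domTy_comp.mpr (dom_iff.mpr ((dom_iff.mp (hd rfl)).trans ?_))
      exact sup_le (dom_iff.mp h2) (le_sup_right.trans h1)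
  | @rMod A m V hV =>
      intro Γ T h
      cases m with
      | up A₀ =>
          obtain ⟨C, U, B, rfl, hd, hM⟩ := mod_up_inv h
          refine ⟨.comp B U, hM, Or.inr ⟨C, B, U, rfl, rfl⟩, fun A' _ hB => ?_⟩
          refine domTy_comp.mpr (dom_iff.mpr ((dom_iff.mp (hd rfl)).trans ?_))
          exact inf_le_left.trans (dom_iff.mp (domTy_comp.mp hB))
      | dn A₀ =>
          obtain ⟨C, U, B, rfl, hd, hM⟩ := mod_dn_inv h
          refine ⟨.comp B U, hM, Or.inr ⟨C, B, U, rfl, rfl⟩, fun A' _ hB => ?_⟩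
          exact domTy_comp.mpr (dom_trans (domTy_comp.mp hB) (hd rfl))
  | @cMod A m M M₀ hE ih =>
      intro Γ T h
      cases m with
      | up A₀ =>
          obtain ⟨C, U, B, rfl, hd, hM⟩ := mod_up_inv h
          obtain ⟨S', hM', hC, htr⟩ := ih Γ _ hM
          obtain ⟨b, rfl⟩ := hC.comp_elim
          refine ⟨.comp (b ⊓ A₀ᶜ) U, .modUp hM', Or.inr ⟨C, b ⊓ A₀ᶜ, U, rfl, rfl⟩,
            fun A' hA' hb => ?_⟩
          have h1 : b ⊓ A₀ᶜ ≤ A' := dom_iff.mp (domTy_comp.mp hb)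
          have h2 : b ≤ A₀ ⊔ A' := ba1 h1
          have h3 : dom (A₀ ⊔ A') (A₀ ⊔ A) :=
            dom_iff.mpr (sup_le_sup_left (dom_iff.mp hA') A₀)
          have h4 : dom (A₀ ⊔ A') B := domTy_comp.mp
            (htr (A₀ ⊔ A') h3 (domTy_comp.mpr (dom_iff.mpr h2)))
          have h5 : B ⊓ A₀ᶜ ≤ A' := ba2 (dom_iff.mp h4)
          exact domTy_comp.mpr (dom_iff.mpr ((dom_iff.mp (hd rfl)).trans h5))
      | dn A₀ =>
          obtain ⟨C, U, B, rfl, hd, hM⟩ := mod_dn_inv h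
          obtain ⟨S', hM', hC, htr⟩ := ih Γ _ hM
          obtain ⟨b, rfl⟩ := hC.comp_elim
          refine ⟨.comp b U, .modDn hM' (fun e => by cases e), Or.inr ⟨C, b, U, rfl, rfl⟩,
            fun A' hA' hb => ?_⟩
          have h1 : dom A' (A₀ ⊓ A) := dom_iff.mpr (inf_le_right.trans (dom_iff.mp hA'))
          have h2 : dom A' B := domTy_comp.mp (htr A' h1 hb)
          exact domTy_comp.mpr (dom_trans h2 (hd rfl))
theorem var_nil {n : ℕ} {X : Ty R} (h : Typing false ([] : List (Ty R)) (.var n) X) : False := by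
  obtain ⟨T, hg, _⟩ := var_inv h
  simp at hg

theorem canon_arrow {V : Tm R} {S T : Ty R} (h : Typing false [] V (.arrow S T))
    (hv : V.IsValue) : ∃ M, V = .abs M := by
  cases hv with
  | base n => cases base_inv h
  | var n => exact absurd h var_nil
  | abs M => exact ⟨M, rfl⟩
  | grd B M => obtain ⟨_, _, he, _, _⟩ := grd_inv h; cases he
  | unit M => obtain ⟨_, _, he, _, _⟩ := unit_inv h; cases he

theorem canon_grd {V : Tm R} {A₀ : R} {T : Ty R} (h : Typing false [] V (.grd A₀ T))
    (hv : V.IsValue) : ∃ B M, V = .grd B M ∧ dom B A₀ := by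
  cases hv with
  | base n => cases base_inv h
  | var n => exact absurd h var_nil
  | abs M => obtain ⟨_, _, _, _, he, _, _, _⟩ := abs_inv h; cases he
  | grd B M =>
      obtain ⟨A₁, T₁, he, hd, _⟩ := grd_inv h
      injection he with e1 e2; subst e1; subst e2
      exact ⟨B, M, rfl, hd rfl⟩
  | unit M => obtain ⟨_, _, he, _, _⟩ := unit_inv h; cases he

theorem canon_comp {V : Tm R} {B : R} {U : Ty R} (h : Typing false [] V (.comp B U))
    (hv : V.IsValue) : ∃ M, V = .unit M := by
  cases hv with
  | base n => cases base_inv h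
  | var n => exact absurd h var_nil
  | abs M => obtain ⟨_, _, _, _, he, _, _, _⟩ := abs_inv h; cases he
  | grd B M => obtain ⟨_, _, he, _, _⟩ := grd_inv h; cases he
  | unit M => exact ⟨M, rfl⟩

theorem value_domty {V : Tm R} {X : Ty R} {A : R} (h : Typing false [] V X)
    (hv : V.IsValue) : DomTy A X := by
  cases hv with
  | base n => have e := base_inv h; subst e; trivial
  | var n => exact absurd h var_nil
  | abs M => obtain ⟨_, _, _, _, he, _, _, _⟩ := abs_inv h; subst he; trivial
  | grd B M => obtain ⟨_, _, he, _, _⟩ := grd_inv h; subst he; trivial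
  | unit M =>
      obtain ⟨B, U, he, hd, _⟩ := unit_inv h; subst he
      exact domTy_comp.mpr (dom_iff.mpr ((dom_iff.mp (hd rfl)).trans bot_le))

theorem progress {M : Tm R} : ∀ T : Ty R, Typing false [] M T → ∀ A : R,
    M.IsValue ∨ (∃ M', Eval A M M') ∨ Err A M := by
  induction M with
  | base n => exact fun _ _ _ => Or.inl (.base n)
  | var n => exact fun _ h _ => absurd h var_nil
  | abs M _ => exact fun _ _ _ => Or.inl (.abs M)
  | grd B M _ => exact fun _ _ _ => Or.inl (.grd B M)
  | unit M _ => exact fun _ _ _ => Or.inl (.unit M)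
  | app M N ihM _ =>
      intro T h A
      obtain ⟨S, hM, hN⟩ := app_inv h
      rcases ihM _ hM A with hv | ⟨M', hs⟩ | he
      · obtain ⟨M₀, rfl⟩ := canon_arrow hM hv
        exact Or.inr (Or.inl ⟨_, .rApp⟩)
      · exact Or.inr (Or.inl ⟨_, .cApp hs⟩)
      · exact Or.inr (Or.inr (.ctxApp he))
  | fix M ihM =>
      intro T h A
      obtain ⟨T₀, hM, _⟩ := fix_inv h
      rcases ihM _ hM A with hv | ⟨M', hs⟩ | he
      · obtain ⟨M₀, rfl⟩ := canon_arrow hM hv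
        exact Or.inr (Or.inl ⟨_, .rFix⟩)
      · exact Or.inr (Or.inl ⟨_, .cFix hs⟩)
      · exact Or.inr (Or.inr (.ctxFix he))
  | chk M ihM =>
      intro T h A
      obtain ⟨A₀, T₀, rfl, hM⟩ := chk_inv h
      rcases ihM _ hM A with hv | ⟨M', hs⟩ | he
      · obtain ⟨B, M₂, rfl, _⟩ := canon_grd hM hv
        by_cases hx : dom A B
        · exact Or.inr (Or.inl ⟨_, .rChk hx⟩)
        · exact Or.inr (Or.inr (.chk hx))
      · exact Or.inr (Or.inl ⟨_, .cChk hs⟩)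
      · exact Or.inr (Or.inr (.ctxChk he))
  | bind M N ihM _ =>
      intro T h A
      obtain ⟨C, U, A₀, B₀, T₀, rfl, _, hM, _⟩ := bind_inv h
      rcases ihM _ hM A with hv | ⟨M', hs⟩ | he
      · obtain ⟨M₂, rfl⟩ := canon_comp hM hv
        exact Or.inr (Or.inl ⟨_, .rBind⟩)
      · exact Or.inr (Or.inl ⟨_, .cBind hs⟩)
      · exact Or.inr (Or.inr (.ctxBind he))
  | mod m M ihM =>
      intro T h A
      have hM : ∃ B U, Typing false ([] : List (Ty R)) M (.comp B U) := by
        cases m with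
        | up A₀ => obtain ⟨C, U, B, _, _, hM⟩ := mod_up_inv h; exact ⟨B, U, hM⟩
        | dn A₀ => obtain ⟨C, U, B, _, _, hM⟩ := mod_dn_inv h; exact ⟨B, U, hM⟩
      obtain ⟨B, U, hM⟩ := hM
      rcases ihM _ hM (m.app A) with hv | ⟨M', hs⟩ | he
      · exact Or.inr (Or.inl ⟨_, .rMod hv⟩)
      · exact Or.inr (Or.inl ⟨_, .cMod hs⟩)
      · exact Or.inr (Or.inr (.ctxMod he))

theorem preservation_multi {A : R} {M N : Tm R} (hE : Evals A M N) :
    ∀ T : Ty R, Typing false [] M T → ¬ DomTy A T →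
      ∃ S, Typing false [] N S ∧ ¬ DomTy A S := by
  induction hE using Relation.ReflTransGen.head_induction_on with
  | refl => exact fun T h hD => ⟨T, h, hD⟩
  | head hstep _ ih =>
      intro T h hD
      obtain ⟨S, hN, _, htr⟩ := preservation hstep [] T h
      exact ih S hN (fun hS => hD (htr A (dom_refl A) hS))
end LRBAC

/-- Role-error theorem for the second (necessary) type system. -/
theorem stmt_18 (R : Type*) [BooleanAlgebra R] (A : R) (M : Tm R) (T : Ty R)
    (hT : Typing false [] M T) (hD : ¬ DomTy A T) :
    Diverges A M ∨ ∃ N : Tm R, Evals A M N ∧ Err A N := by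
  by_cases h : ∀ N, Evals A M N → ∃ N', Eval A N N'
  · left
    choose g hg using h
    let f : ℕ → {N : Tm R // Evals A M N} :=
      fun n => Nat.rec ⟨M, Relation.ReflTransGen.refl⟩
        (fun _ p => ⟨g p.1 p.2, p.2.tail (hg p.1 p.2)⟩) n
    exact ⟨fun n => (f n).1, rfl, fun n => hg (f n).1 (f n).2⟩
  · right
    push_neg at h
    obtain ⟨N, hMN, hstuck⟩ := h
    obtain ⟨S, hN, hDS⟩ := preservation_multi hMN T hT hD
    rcases progress S hN A with hv | ⟨N', hs⟩ | he
    · exact absurd (value_domty hN hv) hDS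
    · exact absurd hs (hstuck N')
    · exact ⟨N, hMN, he⟩
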